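/- arXiv:2603.00017 — 2 statements merged into one kernel-verified Lean document; each statement's English description precedes it below -/
import Mathlib

section
/- In Euclidean space ℝ³, with φ = (1+√5)/2, let M = (1/2, (1+φ)/2, φ/2) and M' = (−1/2, (1+φ)/2, φ/2). Then the angle between the vectors M and M' (equivalently, the angle ∠ M O M' at the origin O) equals π/5, i.e. 36°. -/
open Real

noncomputable def phi : ℝ := (1 + Real.sqrt 5) / 2

/-! Reflecting `(a, b, c)` in the first coordinate gives an angle with cosine
`(b² + c² - a²) / (a² + b² + c²)`. For `M` this quotient is `(φ + 1/2) / (φ + 1)`, which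
equals `φ / 2 = cos (π / 5)` because `φ² = φ + 1`. -/

namespace EuclideanSpace

theorem inner_vec3 (a b c d e f : ℝ) :
    inner ℝ !₂[a, b, c] !₂[d, e, f] = a * d + b * e + c * f := by
  simp only [PiLp.inner_apply, Fin.sum_univ_three, RCLike.inner_apply, conj_trivial,
    Matrix.cons_val_zero, Matrix.cons_val_one, Matrix.cons_val_two, Matrix.head_cons,
    Matrix.tail_cons]
  ring

theorem norm_vec3 (a b c : ℝ) : ‖!₂[a, b, c]‖ = √(a ^ 2 + b ^ 2 + c ^ 2) := by
  rw [norm_eq_sqrt_real_inner, inner_vec3]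
  ring_nf

theorem angle_vec3_neg_fst (a b c : ℝ) :
    InnerProductGeometry.angle !₂[a, b, c] !₂[-a, b, c] =
      arccos ((b ^ 2 + c ^ 2 - a ^ 2) / (a ^ 2 + b ^ 2 + c ^ 2)) := by
  have hsq : (-a) ^ 2 = a ^ 2 := neg_sq a
  rw [InnerProductGeometry.angle, inner_vec3, norm_vec3, norm_vec3, hsq,
    mul_self_sqrt (by positivity)]
  ring_nf

end EuclideanSpace

theorem phi_eq_goldenRatio : phi = goldenRatio := rfl

theorem cos_pi_div_five_eq_goldenRatio_div_two : cos (π / 5) = goldenRatio / 2 := by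
  rw [cos_pi_div_five]
  ring

/-- For M = (1/2, (1+φ)/2, φ/2) and M' = (−1/2, (1+φ)/2, φ/2) in ℝ³, the angle
between the vectors M and M' (the angle ∠MOM' at the origin) equals π/5. -/
theorem stmt_11 :
    let M : EuclideanSpace ℝ (Fin 3) := !₂[1 / 2, (1 + phi) / 2, phi / 2]
    let M' : EuclideanSpace ℝ (Fin 3) := !₂[-(1 / 2), (1 + phi) / 2, phi / 2]
    InnerProductGeometry.angle M M' = π / 5 := by
  intro M M'
  have hcos : ((1 + phi) / 2) ^ 2 + (phi / 2) ^ 2 - (1 / 2) ^ 2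
      = cos (π / 5) * ((1 / 2) ^ 2 + ((1 + phi) / 2) ^ 2 + (phi / 2) ^ 2) := by
    rw [cos_pi_div_five_eq_goldenRatio_div_two, phi_eq_goldenRatio]
    linear_combination (-goldenRatio / 4) * goldenRatio_sq
  have hpos : 0 < (1 / 2 : ℝ) ^ 2 + ((1 + phi) / 2) ^ 2 + (phi / 2) ^ 2 := by positivity
  rw [EuclideanSpace.angle_vec3_neg_fst, hcos, mul_div_cancel_right₀ _ hpos.ne',
    arccos_cos (by positivity) (by linarith [pi_pos])]
end

section
/- With φ = (1+√5)/2, let V ⊂ ℝ³ be the twelve-point set {(0,±1,±φ), (±1,±φ,0), (±φ,0,±1)} (all sign combinations), and let N = (0,1,φ), S = (0,−1,−φ). Suppose u, l ∈ V satisfy dist(N,u) = 2, dist(S,l) = 2, and dist(u,l) = 2 (so {u,l} is a cross-edge joining an upper-ring vertex to an adjacent lower-ring vertex). Then the midpoint m = (u+l)/2 satisfies ⟪m, N − S⟫ = 0 and ‖m‖ = φ; that is, every cross-edge midpoint lies on the equatorial plane through the center perpendicular to the axis NS, on the circle of radius φ. -/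
/-!
All twelve vertices lie on the sphere of radius `√(φ² + 1)` about the origin, and `S = -N`.
On a sphere about the origin, distances determine inner products: `dist N u = dist (-N) l`
forces `⟪u, N⟫ = -⟪l, N⟫`, so `u + l ⊥ N`. Apollonius in the triangle `0 u l` gives
`‖m‖² = (φ² + 1) - (dist u l / 2)² = φ²`.
-/

open RealInnerProductSpace

/-- The twelve vertices (0,±1,±φ), (±1,±φ,0), (±φ,0,±1) of the standard regular
icosahedron of edge length 2. -/
noncomputable def icoV : Set (EuclideanSpace ℝ (Fin 3)) :=
  {!₂[0, 1, phi], !₂[0, 1, -phi], !₂[0, -1, phi], !₂[0, -1, -phi],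
   !₂[1, phi, 0], !₂[1, -phi, 0], !₂[-1, phi, 0], !₂[-1, -phi, 0],
   !₂[phi, 0, 1], !₂[phi, 0, -1], !₂[-phi, 0, 1], !₂[-phi, 0, -1]}

theorem phi_pos : 0 < phi := Real.goldenRatio_pos

section

variable {F : Type*} [NormedAddCommGroup F] [InnerProductSpace ℝ F]

theorem inner_midpoint_sub_neg_eq_zero {u l n : F} (hu : ‖u‖ = ‖n‖) (hl : ‖l‖ = ‖n‖)
    (h : dist n u = dist (-n) l) : ⟪midpoint ℝ u l, n - -n⟫ = 0 := by
  have hsq : ‖n - u‖ ^ 2 = ‖n + l‖ ^ 2 := by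
    rw [← dist_eq_norm, h, dist_eq_norm, ← norm_neg, neg_sub, sub_neg_eq_add, add_comm]
  have key : ⟪u + l, n⟫ = 0 := by
    rw [norm_sub_sq_real, norm_add_sq_real, hu, hl] at hsq
    rw [inner_add_left, real_inner_comm n u, real_inner_comm n l] at *
    linarith
  rw [midpoint_eq_smul_add, inner_smul_left, inner_sub_right, inner_neg_right, sub_neg_eq_add,
    key, add_zero, mul_zero]

theorem norm_midpoint_sq_of_norm_eq {u l : F} {r : ℝ} (hu : ‖u‖ = r) (hl : ‖l‖ = r) :
    ‖midpoint ℝ u l‖ ^ 2 = r ^ 2 - (dist u l / 2) ^ 2 := by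
  have := EuclideanGeometry.dist_sq_add_dist_sq_eq_two_mul_dist_midpoint_sq_add_half_dist_sq
    (0 : F) u l
  simp only [dist_zero_left, hu, hl] at this
  linarith

end

theorem EuclideanSpace.norm_sq_vec3 (a b c : ℝ) : ‖!₂[a, b, c]‖ ^ 2 = a ^ 2 + b ^ 2 + c ^ 2 := by
  simp [EuclideanSpace.norm_sq_eq, Fin.sum_univ_three]

theorem norm_sq_of_mem_icoV {v : EuclideanSpace ℝ (Fin 3)} (hv : v ∈ icoV) :
    ‖v‖ ^ 2 = phi ^ 2 + 1 := by
  simp only [icoV, Set.mem_insert_iff, Set.mem_singleton_iff] at hv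
  rcases hv with rfl | rfl | rfl | rfl | rfl | rfl | rfl | rfl | rfl | rfl | rfl | rfl <;>
  · rw [EuclideanSpace.norm_sq_vec3]; ring

/-- Every cross-edge midpoint lies on the equatorial plane perpendicular to the
axis NS through the center, on the circle of radius φ: if u, l are icosahedron
vertices with dist(N,u) = 2, dist(S,l) = 2, dist(u,l) = 2, then the midpoint
m = (u+l)/2 satisfies ⟪m, N − S⟫ = 0 and ‖m‖ = φ. -/
theorem stmt_12 :
    let N : EuclideanSpace ℝ (Fin 3) := !₂[0, 1, phi]
    let S : EuclideanSpace ℝ (Fin 3) := !₂[0, -1, -phi]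
    ∀ u ∈ icoV, ∀ l ∈ icoV,
      dist N u = 2 → dist S l = 2 → dist u l = 2 →
      ⟪midpoint ℝ u l, N - S⟫ = 0 ∧ ‖midpoint ℝ u l‖ = phi := by
  intro N S u hu l hl hNu hSl hul
  have hN : N ∈ icoV := by simp [icoV, N]
  have hS : S = -N := by ext i; fin_cases i <;> simp [N, S]
  have hnorm {v w : EuclideanSpace ℝ (Fin 3)} (hv : v ∈ icoV) (hw : w ∈ icoV) : ‖v‖ = ‖w‖ :=
    (sq_eq_sq₀ (norm_nonneg _) (norm_nonneg _)).1 <| by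
      rw [norm_sq_of_mem_icoV hv, norm_sq_of_mem_icoV hw]
  refine ⟨hS ▸ inner_midpoint_sub_neg_eq_zero (hnorm hu hN) (hnorm hl hN)
    (by rw [hNu, ← hS, hSl]), ?_⟩
  refine (sq_eq_sq₀ (norm_nonneg _) phi_pos.le).1 ?_
  rw [norm_midpoint_sq_of_norm_eq rfl (hnorm hl hu), norm_sq_of_mem_icoV hu, hul]
  ring
end
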